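/- arXiv:2404.06724 — 8 statements merged into one kernel-verified Lean document; each statement's English description precedes it below -/
import Mathlib

section
/- Let L/K be a finite separable H-Galois extension, where H is a finite-dimensional Hopf K-algebra. Then for every H-subextension L0 of L/K one has L^{J(L0)} = L0; that is, the fixed field of the annihilator J(L0) recovers L0 exactly. -/
open TensorProduct

section Defs

variable (K L H : Type) [Field K] [Field L] [Algebra K L] [Ring H] [HopfAlgebra K H]

/-- `L` is a left `H`-module algebra via `α`. -/
def IsModuleAlgebra (α : H →ₐ[K] Module.End K L) : Prop :=
  (∀ h : H, α h 1 = Coalgebra.counit (R := K) h • (1 : L)) ∧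
  ∀ h : H,
    (α h : L →ₗ[K] L) ∘ₗ LinearMap.mul' K L =
      LinearMap.mul' K L ∘ₗ
        TensorProduct.homTensorHomMap (RingHom.id K) L L L L
          (TensorProduct.map (α.toLinearMap : H →ₗ[K] (L →ₗ[K] L))
            (α.toLinearMap : H →ₗ[K] (L →ₗ[K] L)) (Coalgebra.comul (R := K) h))

noncomputable def lsmulLift (V M : Type) [AddCommGroup V] [Module K V] [AddCommGroup M]
    [Module K M] [Module L M] [IsScalarTower K L M] [SMulCommClass K L M]
    (φ : V →ₗ[K] M) : L ⊗[K] V →ₗ[K] M :=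
  TensorProduct.lift
    (LinearMap.mk₂ K (fun (x : L) (v : V) => x • φ v)
      (fun x x' v => add_smul x x' (φ v))
      (fun c x v => smul_assoc c x (φ v))
      (fun x v v' => by rw [map_add, smul_add])
      (fun c x v => by rw [map_smul, smul_comm]))

/-- The canonical (Galois) map `L ⊗[K] H →ₗ[K] End_K(L)`, `x ⊗ h ↦ (y ↦ x * α h y)`. -/
noncomputable def canMap (α : H →ₐ[K] Module.End K L) : L ⊗[K] H →ₗ[K] (L →ₗ[K] L) :=
  lsmulLift K L H (L →ₗ[K] L) (α.toLinearMap : H →ₗ[K] (L →ₗ[K] L))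

/-- The annihilator `J(L0)` of an intermediate field. -/
def Jann (α : H →ₐ[K] Module.End K L) (L0 : IntermediateField K L) : Submodule K H where
  carrier := {h : H | ∀ x ∈ L0, α h x = 0}
  add_mem' := by
    intro a b ha hb x hx
    simp [map_add, LinearMap.add_apply, ha x hx, hb x hx]
  zero_mem' := by intro x hx; simp
  smul_mem' := by
    intro c a ha x hx
    simp [map_smul, LinearMap.smul_apply, ha x hx]

/-- The map `H →ₗ[K] Hom_K(L0, L)`, `h ↦ (α h)|_{L0}`. -/
def resMap (α : H →ₐ[K] Module.End K L) (L0 : IntermediateField K L) :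
    H →ₗ[K] (↥L0 →ₗ[K] L) where
  toFun h := (α h : L →ₗ[K] L) ∘ₗ L0.val.toLinearMap
  map_add' h h' := by ext x; simp
  map_smul' c h := by ext x; simp

lemma Jann_le_ker (α : H →ₐ[K] Module.End K L) (L0 : IntermediateField K L) :
    Jann K L H α L0 ≤ LinearMap.ker (resMap K L H α L0) := by
  intro h hh
  rw [LinearMap.mem_ker]
  ext x
  exact hh x x.2

/-- The induced canonical map `L ⊗[K] (H / J(L0)) →ₗ[K] Hom_K(L0, L)`. -/
noncomputable def can0 (α : H →ₐ[K] Module.End K L) (L0 : IntermediateField K L) :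
    L ⊗[K] (H ⧸ Jann K L H α L0) →ₗ[K] (↥L0 →ₗ[K] L) :=
  lsmulLift K L (H ⧸ Jann K L H α L0) (↥L0 →ₗ[K] L)
    ((Jann K L H α L0).liftQ (resMap K L H α L0) (Jann_le_ker K L H α L0))

/-- `L0` is an `H`-subextension: the induced canonical map is injective. -/
def IsHSubextension (α : H →ₐ[K] Module.End K L) (L0 : IntermediateField K L) : Prop :=
  Function.Injective (can0 K L H α L0)

end Defs

section Statement

variable (K L H : Type) [Field K] [Field L] [Algebra K L] [Ring H] [HopfAlgebra K H]


variable (K L H : Type) [Field K] [Field L] [Algebra K L] [Ring H] [HopfAlgebra K H]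

/-- The fixed space of `J(L0)`, as a `K`-submodule of `L`. -/
def fixSub (α : H →ₐ[K] Module.End K L) (L0 : IntermediateField K L) : Submodule K L where
  carrier := {x : L | ∀ h ∈ Jann K L H α L0, α h x = 0}
  add_mem' := by
    intro a b ha hb h hh
    rw [map_add, ha h hh, hb h hh, add_zero]
  zero_mem' := by intro h hh; simp
  smul_mem' := by
    intro c a ha h hh
    rw [map_smul, ha h hh, smul_zero]

/-- Restriction map to the fixed space. -/
def resMapF (α : H →ₐ[K] Module.End K L) (L0 : IntermediateField K L) :
    H →ₗ[K] (↥(fixSub K L H α L0) →ₗ[K] L) where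
  toFun h := (α h : L →ₗ[K] L) ∘ₗ (fixSub K L H α L0).subtype
  map_add' h h' := by ext x; simp
  map_smul' c h := by ext x; simp

lemma Jann_le_kerF (α : H →ₐ[K] Module.End K L) (L0 : IntermediateField K L) :
    Jann K L H α L0 ≤ LinearMap.ker (resMapF K L H α L0) := by
  intro h hh
  rw [LinearMap.mem_ker]
  ext x
  exact x.2 h hh

/-- The canonical map into `Hom_K(F, L)` where `F` is the fixed space of `J(L0)`. -/
noncomputable def canF (α : H →ₐ[K] Module.End K L) (L0 : IntermediateField K L) :
    L ⊗[K] (H ⧸ Jann K L H α L0) →ₗ[K] (↥(fixSub K L H α L0) →ₗ[K] L) :=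
  lsmulLift K L (H ⧸ Jann K L H α L0) (↥(fixSub K L H α L0) →ₗ[K] L)
    ((Jann K L H α L0).liftQ (resMapF K L H α L0) (Jann_le_kerF K L H α L0))

lemma canF_comm (α : H →ₐ[K] Module.End K L) (L0 : IntermediateField K L) :
    (canF K L H α L0) ∘ₗ LinearMap.lTensor L (Jann K L H α L0).mkQ =
      (LinearMap.lcomp K L (fixSub K L H α L0).subtype) ∘ₗ canMap K L H α := by
  apply TensorProduct.ext'
  intro x h
  ext y
  simp [canF, canMap, lsmulLift, resMapF]

lemma canF_surjective (α : H →ₐ[K] Module.End K L)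
    (hGal : Function.Bijective (canMap K L H α)) (L0 : IntermediateField K L) :
    Function.Surjective (canF K L H α L0) := by
  intro φ
  obtain ⟨g, hg⟩ := LinearMap.exists_extend φ
  obtain ⟨t, ht⟩ := hGal.2 g
  refine ⟨LinearMap.lTensor L (Jann K L H α L0).mkQ t, ?_⟩
  have h1 : canF K L H α L0 (LinearMap.lTensor L (Jann K L H α L0).mkQ t) =
      (LinearMap.lcomp K L (fixSub K L H α L0).subtype) (canMap K L H α t) :=
    congrFun (congrArg DFunLike.coe (canF_comm K L H α L0)) t
  rw [h1, ht]
  exact hg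

/-- For a finite separable `H`-Galois extension `L/K` and an `H`-subextension `L0`,
the fixed field of `J(L0)` is exactly `L0`. -/
theorem fixedField_Jann_eq [FiniteDimensional K L] [Algebra.IsSeparable K L]
    [FiniteDimensional K H]
    (α : H →ₐ[K] Module.End K L) (hMA : IsModuleAlgebra K L H α)
    (hGal : Function.Bijective (canMap K L H α))
    (L0 : IntermediateField K L)
    (hsub : IsHSubextension K L H α L0) :
    {x : L | ∀ h ∈ Jann K L H α L0, α h x = Coalgebra.counit (R := K) h • x} =
      (L0 : Set L) := by
  classical
  have hε : ∀ h ∈ Jann K L H α L0, Coalgebra.counit (R := K) h = 0 := by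
    intro h hh
    have h1 : α h 1 = 0 := hh 1 L0.one_mem
    have h2 := hMA.1 h
    rw [h1] at h2
    rcases smul_eq_zero.mp h2.symm with h3 | h3
    · exact h3
    · exact absurd h3 one_ne_zero
  -- finite dimensionality instances
  haveI : FiniteDimensional K (H ⧸ Jann K L H α L0) := inferInstance
  -- dimension count
  have hsurj := canF_surjective K L H α hGal L0
  have hr1 : Module.finrank K (↥(fixSub K L H α L0) →ₗ[K] L) ≤
      Module.finrank K (L ⊗[K] (H ⧸ Jann K L H α L0)) := by
    have := LinearMap.finrank_range_le (canF K L H α L0)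
    rwa [LinearMap.range_eq_top.mpr hsurj, finrank_top] at this
  have hr2 : Module.finrank K (L ⊗[K] (H ⧸ Jann K L H α L0)) ≤
      Module.finrank K (↥L0 →ₗ[K] L) :=
    LinearMap.finrank_le_finrank_of_injective hsub
  rw [Module.finrank_linearMap, Module.finrank_tensorProduct] at hr1
  rw [Module.finrank_tensorProduct, Module.finrank_linearMap] at hr2
  have hn : 0 < Module.finrank K L := Module.finrank_pos
  have hFle : Module.finrank K ↥(fixSub K L H α L0) ≤ Module.finrank K ↥L0 := by
    have h3 : Module.finrank K ↥(fixSub K L H α L0) * Module.finrank K L ≤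
        Module.finrank K ↥L0 * Module.finrank K L := by
      calc Module.finrank K ↥(fixSub K L H α L0) * Module.finrank K L ≤
          Module.finrank K L * Module.finrank K (H ⧸ Jann K L H α L0) := hr1
        _ ≤ Module.finrank K ↥L0 * Module.finrank K L := hr2
    exact Nat.le_of_mul_le_mul_right h3 hn
  have hle : Subalgebra.toSubmodule L0.toSubalgebra ≤ fixSub K L H α L0 := by
    intro x hx h hh
    exact hh x hx
  have hfr : Module.finrank K ↥(fixSub K L H α L0) ≤
      Module.finrank K ↥(Subalgebra.toSubmodule L0.toSubalgebra) := hFle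
  have heq : Subalgebra.toSubmodule L0.toSubalgebra = fixSub K L H α L0 :=
    Submodule.eq_of_le_of_finrank_le hle hfr
  ext x
  constructor
  · intro hx
    have hxF : x ∈ fixSub K L H α L0 := by
      intro h hh
      rw [hx h hh, hε h hh, zero_smul]
    rw [← heq] at hxF
    exact hxF
  · intro hx h hh
    rw [hh x hx, hε h hh, zero_smul]

end Statement
end

section
/- Let L/K be a finite separable H-Galois extension, where H is a finite-dimensional Hopf K-algebra, and let L1 and L2 be H-subextensions of L/K. Then the compositum L1·L2 (the intermediate field generated by L1 and L2) is again an H-subextension of L/K. -/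
open TensorProduct

section Aux

open TensorProduct

variable (K L : Type) [Field K] [Field L] [Algebra K L]

lemma lsmulLift_tmul' (V M : Type) [AddCommGroup V] [Module K V] [AddCommGroup M]
    [Module K M] [Module L M] [IsScalarTower K L M] [SMulCommClass K L M]
    (φ : V →ₗ[K] M) (x : L) (v : V) : lsmulLift K L V M φ (x ⊗ₜ[K] v) = x • φ v := rfl

/-- Injectivity of `lsmulLift φ` yields `L`-linear independence of the image of a `K`-basis. -/
lemma li_of_lsmulLift_inj {V M : Type} [AddCommGroup V] [Module K V] [AddCommGroup M]
    [Module K M] [Module L M] [IsScalarTower K L M] [SMulCommClass K L M]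
    {ι : Type} [Fintype ι] (b : Module.Basis ι K V) (φ : V →ₗ[K] M)
    (hinj : Function.Injective (lsmulLift K L V M φ)) :
    LinearIndependent L (fun i => φ (b i)) := by
  rw [Fintype.linearIndependent_iff]
  intro c hc
  have h1 : lsmulLift K L V M φ (∑ i, c i ⊗ₜ[K] b i) = 0 := by
    rw [map_sum]
    simpa [lsmulLift_tmul'] using hc
  have h0 : (∑ i, c i ⊗ₜ[K] b i) = 0 := by
    apply hinj
    simpa using h1
  have h2 : (∑ i, c i • (Algebra.TensorProduct.basis L b) i) = 0 := by
    rw [← h0]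
    exact Finset.sum_congr rfl fun i _ =>
      Algebra.TensorProduct.basis_repr_symm_apply' b (c i) i
  exact Fintype.linearIndependent_iff.mp
    (Algebra.TensorProduct.basis L b).linearIndependent c h2

/-- `L`-linear independence of the image of a `K`-basis yields injectivity of `lsmulLift φ`. -/
lemma lsmulLift_inj_of_li {V M : Type} [AddCommGroup V] [Module K V] [AddCommGroup M]
    [Module K M] [Module L M] [IsScalarTower K L M] [SMulCommClass K L M]
    {ι : Type} [Fintype ι] (b : Module.Basis ι K V) (φ : V →ₗ[K] M)
    (hli : LinearIndependent L (fun i => φ (b i))) :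
    Function.Injective (lsmulLift K L V M φ) := by
  rw [injective_iff_map_eq_zero]
  intro t ht
  have hrep : (∑ i, (Algebra.TensorProduct.basis L b).repr t i ⊗ₜ[K] b i) = t := by
    conv_rhs => rw [← (Algebra.TensorProduct.basis L b).sum_repr t]
    exact Finset.sum_congr rfl fun i _ =>
      (Algebra.TensorProduct.basis_repr_symm_apply' b _ i).symm
  have h1 : (∑ i, (Algebra.TensorProduct.basis L b).repr t i • φ (b i)) = 0 := by
    calc (∑ i, (Algebra.TensorProduct.basis L b).repr t i • φ (b i))
        = lsmulLift K L V M φ (∑ i, (Algebra.TensorProduct.basis L b).repr t i ⊗ₜ[K] b i) := by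
          rw [map_sum]
          exact Finset.sum_congr rfl fun i _ => (lsmulLift_tmul' K L V M φ _ _).symm
      _ = 0 := by rw [hrep, ht]
  have hz : ∀ i, (Algebra.TensorProduct.basis L b).repr t i = 0 :=
    Fintype.linearIndependent_iff.mp hli _ h1
  rw [← hrep]
  simp [hz]

/-- injectivity of `v ↦ 1 ⊗ v`. -/
lemma one_tmul_eq_zero {V : Type} [AddCommGroup V] [Module K V] {v : V}
    (h : (1 : L) ⊗ₜ[K] v = 0) : v = 0 := by
  let b := Module.Free.chooseBasis K V
  have h1 := congrArg (Algebra.TensorProduct.basis L b).repr h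
  rw [Algebra.TensorProduct.basis_repr_tmul, map_zero, one_smul] at h1
  have h2 : ∀ i, algebraMap K L (b.repr v i) = 0 := by
    intro i
    have := congrArg (fun f => f i) h1
    simpa using this
  have h3 : b.repr v = 0 := by
    ext i
    exact (algebraMap K L).injective (by simpa using h2 i)
  simpa using congrArg b.repr.symm h3

/-- Products of `L`-independent families of `K`-linear functionals are `L`-independent. -/
lemma linearIndependent_smulRight {ι κ V W : Type} [Fintype ι] [Fintype κ]
    [AddCommGroup V] [Module K V] [AddCommGroup W] [Module K W]
    {f : ι → V →ₗ[K] L} {g : κ → W →ₗ[K] L}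
    (hf : LinearIndependent L f) (hg : LinearIndependent L g) :
    LinearIndependent L (fun p : ι × κ => (f p.1).smulRight (g p.2)) := by
  refine (Fintype.linearIndependent_iff (M := V →ₗ[K] W →ₗ[K] L)).mpr ?_
  intro c hc
  have hx : ∀ (x : V) (j : κ), (∑ i, c (i, j) * f i x) = 0 := by
    intro x j
    have h1 : (∑ j, (∑ i, c (i, j) * f i x) • g j) = 0 := by
      have h2 := congrArg (fun F => F x) hc
      simp only [LinearMap.coe_sum, Finset.sum_apply, LinearMap.smul_apply,
        LinearMap.smulRight_apply, LinearMap.zero_apply] at h2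
      rw [Fintype.sum_prod_type_right] at h2
      rw [← h2]
      refine Finset.sum_congr rfl fun j _ => ?_
      rw [Finset.sum_smul]
      refine Finset.sum_congr rfl fun i _ => ?_
      rw [mul_smul]
    exact Fintype.linearIndependent_iff.mp hg _ h1 j
  rintro ⟨i, j⟩
  have h2 : (∑ i, c (i, j) • f i) = 0 := by
    ext x
    simpa using hx x j
  exact Fintype.linearIndependent_iff.mp hf _ h2 i

end Aux


section MainAux

open TensorProduct

variable (K L H : Type) [Field K] [Field L] [Algebra K L] [Ring H] [HopfAlgebra K H]
variable (α : H →ₐ[K] Module.End K L) (L1 L2 : IntermediateField K L)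

/-- The induced map `H ⧸ J(L0) →ₗ[K] Hom_K(L0, L)`. -/
noncomputable def resBar (L0 : IntermediateField K L) :
    (H ⧸ Jann K L H α L0) →ₗ[K] (↥L0 →ₗ[K] L) :=
  (Jann K L H α L0).liftQ (resMap K L H α L0) (Jann_le_ker K L H α L0)

/-- The bilinear pairing `(f, g) ↦ ((x, y) ↦ f x * g y)`. -/
noncomputable def pairC : (↥L1 →ₗ[K] L) →ₗ[K] (↥L2 →ₗ[K] L) →ₗ[K]
    (↥L1 →ₗ[K] (↥L2 →ₗ[K] L)) :=
  LinearMap.mk₂ K (fun f g => f.smulRight g)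
    (fun f f' g => by ext x y; simp [add_smul])
    (fun c f g => by ext x y; simp [mul_assoc])
    (fun f g g' => by ext x y; simp)
    (fun c f g => by ext x y; simp [smul_comm (f x) c])

/-- The induced map `(H⧸J(L1)) ⊗ (H⧸J(L2)) → Hom(L1, Hom(L2, L))`. -/
noncomputable def Bmap : (H ⧸ Jann K L H α L1) ⊗[K] (H ⧸ Jann K L H α L2) →ₗ[K]
    (↥L1 →ₗ[K] (↥L2 →ₗ[K] L)) :=
  TensorProduct.lift ((pairC K L L1 L2).compl₁₂ (resBar K L H α L1) (resBar K L H α L2))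

/-- Comultiplication followed by the two quotient maps. -/
noncomputable def deltaBar : H →ₗ[K]
    (H ⧸ Jann K L H α L1) ⊗[K] (H ⧸ Jann K L H α L2) :=
  (TensorProduct.map (Jann K L H α L1).mkQ (Jann K L H α L2).mkQ) ∘ₗ
    (Coalgebra.comul (R := K))

/-- The big canonical map `L ⊗ (H⧸J(L1)) ⊗ (H⧸J(L2)) → Hom(L1, Hom(L2, L))`. -/
noncomputable def BigMap : L ⊗[K] ((H ⧸ Jann K L H α L1) ⊗[K] (H ⧸ Jann K L H α L2)) →ₗ[K]
    (↥L1 →ₗ[K] (↥L2 →ₗ[K] L)) :=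
  lsmulLift K L ((H ⧸ Jann K L H α L1) ⊗[K] (H ⧸ Jann K L H α L2)) (↥L1 →ₗ[K] (↥L2 →ₗ[K] L))
    (Bmap K L H α L1 L2)

lemma Bmap_tmul (q1 : H ⧸ Jann K L H α L1) (q2 : H ⧸ Jann K L H α L2) :
    Bmap K L H α L1 L2 (q1 ⊗ₜ[K] q2)
      = (resBar K L H α L1 q1).smulRight (resBar K L H α L2 q2) := rfl

/-- KEY: the value of `Bmap ∘ deltaBar` is multiplication followed by `α`. -/
lemma Bmap_deltaBar (hMA : IsModuleAlgebra K L H α) (h : H) (x : ↥L1) (y : ↥L2) :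
    Bmap K L H α L1 L2 (deltaBar K L H α L1 L2 h) x y = α h ((x : L) * (y : L)) := by
  have happ := congrArg (fun F : L ⊗[K] L →ₗ[K] L => F ((x : L) ⊗ₜ[K] (y : L))) (hMA.2 h)
  simp only [LinearMap.comp_apply, LinearMap.mul'_apply] at happ
  rw [happ]
  show Bmap K L H α L1 L2
    ((TensorProduct.map (Jann K L H α L1).mkQ (Jann K L H α L2).mkQ)
      (Coalgebra.comul (R := K) h)) x y = _
  induction (Coalgebra.comul (R := K) h) using TensorProduct.induction_on with
  | zero => simp
  | tmul a b =>
    rw [TensorProduct.map_tmul, Bmap_tmul, TensorProduct.map_tmul,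
      TensorProduct.homTensorHomMap_apply, TensorProduct.map_tmul, LinearMap.mul'_apply]
    simp only [Submodule.mkQ_apply]
    rw [resBar, resBar, Submodule.liftQ_apply, Submodule.liftQ_apply]
    simp [resMap, smul_eq_mul]
  | add w w' hw hw' =>
    simp only [map_add, LinearMap.add_apply] at *
    rw [hw, hw']

end MainAux

section MainAux2

open TensorProduct

variable (K L H : Type) [Field K] [Field L] [Algebra K L] [Ring H] [HopfAlgebra K H]
variable (α : H →ₐ[K] Module.End K L) (L1 L2 : IntermediateField K L)

lemma BigMap_tmul (c : L) (w : (H ⧸ Jann K L H α L1) ⊗[K] (H ⧸ Jann K L H α L2)) :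
    BigMap K L H α L1 L2 (c ⊗ₜ[K] w) = c • Bmap K L H α L1 L2 w := rfl

lemma can0_tmul (L0 : IntermediateField K L) (c : L) (h0 : H) :
    can0 K L H α L0 (c ⊗ₜ[K] (Submodule.Quotient.mk h0)) = c • resMap K L H α L0 h0 := rfl

lemma bigMap_injective [FiniteDimensional K H]
    (h1 : IsHSubextension K L H α L1) (h2 : IsHSubextension K L H α L2) :
    Function.Injective (BigMap K L H α L1 L2) := by
  have hf : LinearIndependent L
      (fun i => resBar K L H α L1 (Module.finBasis K (H ⧸ Jann K L H α L1) i)) :=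
    li_of_lsmulLift_inj K L _ _ h1
  have hg : LinearIndependent L
      (fun j => resBar K L H α L2 (Module.finBasis K (H ⧸ Jann K L H α L2) j)) :=
    li_of_lsmulLift_inj K L _ _ h2
  have hfg := linearIndependent_smulRight K L hf hg
  refine lsmulLift_inj_of_li K L
    ((Module.finBasis K (H ⧸ Jann K L H α L1)).tensorProduct
      (Module.finBasis K (H ⧸ Jann K L H α L2))) _ ?_
  have heq : (fun i : Fin _ × Fin _ =>
      Bmap K L H α L1 L2 (((Module.finBasis K (H ⧸ Jann K L H α L1)).tensorProduct
        (Module.finBasis K (H ⧸ Jann K L H α L2))) i))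
      = fun i => (resBar K L H α L1 (Module.finBasis K (H ⧸ Jann K L H α L1) i.1)).smulRight
          (resBar K L H α L2 (Module.finBasis K (H ⧸ Jann K L H α L2) i.2)) := by
    funext i
    rw [Module.Basis.tensorProduct_apply', Bmap_tmul]
  rw [heq]
  exact hfg

end MainAux2



section Statement

variable (K L H : Type) [Field K] [Field L] [Algebra K L] [Ring H] [HopfAlgebra K H]

set_option synthInstance.maxHeartbeats 1000000 in
set_option maxHeartbeats 2000000 in
/-- For a finite separable `H`-Galois extension `L/K`, the compositum of two
`H`-subextensions is again an `H`-subextension. -/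
theorem isHSubextension_sup [FiniteDimensional K L] [Algebra.IsSeparable K L]
    [FiniteDimensional K H]
    (α : H →ₐ[K] Module.End K L) (hMA : IsModuleAlgebra K L H α)
    (hGal : Function.Bijective (canMap K L H α))
    (L1 L2 : IntermediateField K L)
    (h1 : IsHSubextension K L H α L1) (h2 : IsHSubextension K L H α L2) :
    IsHSubextension K L H α (L1 ⊔ L2) := by
  classical
  have hBig := bigMap_injective K L H α L1 L2 h1 h2
  -- B itself is injective
  have hB : ∀ w, Bmap K L H α L1 L2 w = 0 → w = 0 := by
    intro w hw
    have hz : BigMap K L H α L1 L2 ((1 : L) ⊗ₜ[K] w) = 0 := by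
      rw [BigMap_tmul, hw, smul_zero]
    have h0 : (1 : L) ⊗ₜ[K] w = 0 := by
      apply hBig
      rw [hz, map_zero]
    exact one_tmul_eq_zero K L h0
  have hmem : ∀ (x : ↥L1) (y : ↥L2), (x : L) * (y : L) ∈ L1 ⊔ L2 := fun x y =>
    mul_mem ((le_sup_left : L1 ≤ L1 ⊔ L2) x.2) ((le_sup_right : L2 ≤ L1 ⊔ L2) y.2)
  -- J(L1 ⊔ L2) is contained in the kernel of deltaBar
  have hJker : ∀ h0 ∈ Jann K L H α (L1 ⊔ L2), deltaBar K L H α L1 L2 h0 = 0 := by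
    intro h0 hh0
    apply hB
    ext x y
    rw [Bmap_deltaBar K L H α L1 L2 hMA h0 x y]
    simp only [LinearMap.zero_apply]
    exact hh0 _ (hmem x y)
  -- conversely, the kernel of deltaBar is contained in J(L1 ⊔ L2)
  have hconv : ∀ h0 : H, deltaBar K L H α L1 L2 h0 = 0 → h0 ∈ Jann K L H α (L1 ⊔ L2) := by
    intro h0 hd z hz
    have hz' : z ∈ (L1.toSubalgebra ⊔ L2.toSubalgebra : Subalgebra K L) := by
      rw [← IntermediateField.sup_toSubalgebra_of_left]
      exact hz
    rw [← Subalgebra.mulMap_range] at hz'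
    obtain ⟨w, hw⟩ := hz'
    rw [← hw]
    clear hw hz
    show α h0 ((L1.toSubalgebra.mulMap L2.toSubalgebra) w) = 0
    induction w using TensorProduct.induction_on with
    | zero => simp
    | tmul a b =>
      have key := Bmap_deltaBar K L H α L1 L2 hMA h0
        (⟨a.1, (IntermediateField.mem_toSubalgebra L1 a.1).mp a.2⟩ : ↥L1)
        (⟨b.1, (IntermediateField.mem_toSubalgebra L2 b.1).mp b.2⟩ : ↥L2)
      rw [hd, map_zero] at key
      simp only [LinearMap.zero_apply] at key
      rw [Subalgebra.mulMap_tmul]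
      exact key.symm
    | add u v hu hv =>
      rw [map_add, map_add, hu, hv, add_zero]
  have hJle : Jann K L H α (L1 ⊔ L2) ≤ LinearMap.ker (deltaBar K L H α L1 L2) :=
    fun h0 hh0 => LinearMap.mem_ker.mpr (hJker h0 hh0)
  set D := (Jann K L H α (L1 ⊔ L2)).liftQ (deltaBar K L H α L1 L2) hJle with hD
  have hDinj : Function.Injective D := by
    rw [← LinearMap.ker_eq_bot (M := H ⧸ Jann K L H α (L1 ⊔ L2))]
    exact Submodule.ker_liftQ_eq_bot _ _ _
      (fun h0 hh0 => hconv h0 (LinearMap.mem_ker.mp hh0))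
  show Function.Injective (can0 K L H α (L1 ⊔ L2))
  rw [injective_iff_map_eq_zero]
  intro t ht
  have hkey : ∀ s : L ⊗[K] (H ⧸ Jann K L H α (L1 ⊔ L2)), ∀ (x : ↥L1) (y : ↥L2),
      BigMap K L H α L1 L2 (LinearMap.lTensor L D s) x y
        = can0 K L H α (L1 ⊔ L2) s ⟨(x : L) * (y : L), hmem x y⟩ := by
    intro s
    induction s using TensorProduct.induction_on with
    | zero => intro x y; simp
    | tmul c qq =>
      obtain ⟨h0, rfl⟩ := Submodule.mkQ_surjective _ qq
      intro x y
      simp only [Submodule.mkQ_apply]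
      rw [LinearMap.lTensor_tmul, BigMap_tmul, hD, Submodule.liftQ_apply]
      simp only [LinearMap.smul_apply]
      rw [Bmap_deltaBar K L H α L1 L2 hMA h0 x y, can0_tmul]
      simp only [LinearMap.smul_apply]
      rfl
    | add u v hu hv =>
      intro x y
      simp only [map_add, LinearMap.add_apply, hu x y, hv x y]
  have hz : BigMap K L H α L1 L2 (LinearMap.lTensor L D t) = 0 := by
    ext x y
    rw [hkey t x y, ht]
    simp
  have h0 : LinearMap.lTensor L D t = 0 := by
    apply hBig
    rw [hz, map_zero]
  have hlt := Module.Flat.lTensor_preserves_injective_linearMap (M := L) D hDinj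
  apply hlt
  rw [h0, map_zero]

end Statement
end

section
/- Let L/K be a finite separable H-Galois extension, where H is a finite-dimensional Hopf K-algebra, and let L1 and L2 be H-subextensions of L/K. Then the intersection L1 ∩ L2 is again an H-subextension of L/K, and J(L1 ∩ L2) = J(L1) + J(L2) (sum of K-subspaces of H). -/
open TensorProduct

section Proof

variable (K L H : Type) [Field K] [Field L] [Algebra K L] [Ring H] [HopfAlgebra K H]

open Module LinearMap

/-- Restriction map for an arbitrary `K`-subspace of `L`. -/
def resSub (α : H →ₐ[K] Module.End K L) (V : Submodule K L) : H →ₗ[K] (↥V →ₗ[K] L) where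
  toFun h := (α h : L →ₗ[K] L) ∘ₗ V.subtype
  map_add' h h' := by ext x; simp
  map_smul' c h := by ext x; simp

lemma lsmulLift_surjective (α : H →ₐ[K] Module.End K L)
    (hGal : Function.Surjective (canMap K L H α))
    {W : Type} [AddCommGroup W] [Module K W]
    (ι : W →ₗ[K] L) (hι : Function.Injective ι)
    (J : Submodule K H) (ρ : H →ₗ[K] (W →ₗ[K] L))
    (hρ : ∀ h : H, ρ h = (α h : L →ₗ[K] L) ∘ₗ ι)
    (hle : J ≤ LinearMap.ker ρ) :
    Function.Surjective (lsmulLift K L (H ⧸ J) (W →ₗ[K] L) (J.liftQ ρ hle)) := by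
  have key : (lsmulLift K L (H ⧸ J) (W →ₗ[K] L) (J.liftQ ρ hle)) ∘ₗ (LinearMap.lTensor L J.mkQ)
      = (LinearMap.lcomp K L ι) ∘ₗ canMap K L H α := by
    apply TensorProduct.ext'
    intro x h
    simp [lsmulLift, canMap, hρ, LinearMap.lcomp_apply', LinearMap.smul_comp]
  intro f
  obtain ⟨g, hg⟩ := ι.exists_leftInverse_of_injective (LinearMap.ker_eq_bot.mpr hι)
  obtain ⟨t, ht⟩ := hGal (f ∘ₗ g)
  refine ⟨(LinearMap.lTensor L J.mkQ) t, ?_⟩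
  have h2 := LinearMap.congr_fun key t
  simp only [LinearMap.coe_comp, Function.comp_apply] at h2
  rw [h2, ht, LinearMap.lcomp_apply', LinearMap.comp_assoc, hg, LinearMap.comp_id]

lemma finrank_le_of_tensor_surjective [FiniteDimensional K L]
    {Q W : Type} [AddCommGroup Q] [Module K Q] [FiniteDimensional K Q]
    [AddCommGroup W] [Module K W] [FiniteDimensional K W]
    (f : L ⊗[K] Q →ₗ[K] (W →ₗ[K] L)) (hf : Function.Surjective f) :
    Module.finrank K W ≤ Module.finrank K Q := by
  have h1 := LinearMap.finrank_range_le f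
  rw [LinearMap.range_eq_top.mpr hf, finrank_top, Module.finrank_linearMap,
    Module.finrank_tensorProduct] at h1
  have hL : 0 < Module.finrank K L := Module.finrank_pos
  rw [mul_comm (Module.finrank K W)] at h1
  exact Nat.le_of_mul_le_mul_left h1 hL

lemma finrank_le_of_tensor_injective [FiniteDimensional K L]
    {Q W : Type} [AddCommGroup Q] [Module K Q] [FiniteDimensional K Q]
    [AddCommGroup W] [Module K W] [FiniteDimensional K W]
    (f : L ⊗[K] Q →ₗ[K] (W →ₗ[K] L)) (hf : Function.Injective f) :
    Module.finrank K Q ≤ Module.finrank K W := by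
  have h1 := LinearMap.finrank_le_finrank_of_injective hf
  rw [Module.finrank_linearMap, Module.finrank_tensorProduct] at h1
  have hL : 0 < Module.finrank K L := Module.finrank_pos
  rw [mul_comm (Module.finrank K W)] at h1
  exact Nat.le_of_mul_le_mul_left h1 hL

lemma can0_surjective (α : H →ₐ[K] Module.End K L)
    (hGal : Function.Surjective (canMap K L H α)) (L0 : IntermediateField K L) :
    Function.Surjective (can0 K L H α L0) := by
  unfold can0
  exact lsmulLift_surjective K L H α hGal L0.val.toLinearMap
    (fun a b hab => Subtype.ext hab) _ _ (fun h => rfl) (Jann_le_ker K L H α L0)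

end Proof

section Statement

variable (K L H : Type) [Field K] [Field L] [Algebra K L] [Ring H] [HopfAlgebra K H]

/-- For a finite separable `H`-Galois extension `L/K`, the intersection of two
`H`-subextensions is again an `H`-subextension, and `J(L1 ⊓ L2) = J(L1) + J(L2)`. -/
theorem isHSubextension_inf [FiniteDimensional K L] [Algebra.IsSeparable K L]
    [FiniteDimensional K H]
    (α : H →ₐ[K] Module.End K L) (hMA : IsModuleAlgebra K L H α)
    (hGal : Function.Bijective (canMap K L H α))
    (L1 L2 : IntermediateField K L)
    (h1 : IsHSubextension K L H α L1) (h2 : IsHSubextension K L H α L2) :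
    IsHSubextension K L H α (L1 ⊓ L2) ∧
      Jann K L H α (L1 ⊓ L2) = Jann K L H α L1 ⊔ Jann K L H α L2 := by
  classical
  have hsur := hGal.2
  set J1 := Jann K L H α L1 with hJ1def
  set J2 := Jann K L H α L2 with hJ2def
  set J12 := Jann K L H α (L1 ⊓ L2) with hJ12def
  have hA : ∀ L0 : IntermediateField K L,
      Module.finrank K ↥L0 ≤ Module.finrank K (H ⧸ Jann K L H α L0) :=
    fun L0 => finrank_le_of_tensor_surjective K L _ (can0_surjective K L H α hsur L0)
  have hB1 : Module.finrank K (H ⧸ J1) ≤ Module.finrank K ↥L1 :=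
    finrank_le_of_tensor_injective K L _ h1
  have hB2 : Module.finrank K (H ⧸ J2) ≤ Module.finrank K ↥L2 :=
    finrank_le_of_tensor_injective K L _ h2
  have q1 := Submodule.finrank_quotient_add_finrank J1
  have q2 := Submodule.finrank_quotient_add_finrank J2
  have q12 := Submodule.finrank_quotient_add_finrank J12
  -- the subspace sum of L1 and L2
  set V1 := Subalgebra.toSubmodule L1.toSubalgebra with hV1def
  set V2 := Subalgebra.toSubmodule L2.toSubalgebra with hV2def
  set V := V1 ⊔ V2 with hVdef
  set JV := LinearMap.ker (resSub K L H α V) with hJVdef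
  have qV := Submodule.finrank_quotient_add_finrank JV
  have hJVsur : Function.Surjective
      (lsmulLift K L (H ⧸ JV) (↥V →ₗ[K] L) (JV.liftQ (resSub K L H α V) le_rfl)) :=
    lsmulLift_surjective K L H α hsur V.subtype (fun a b hab => Subtype.ext hab) JV
      (resSub K L H α V) (fun h => rfl) le_rfl
  have hVle : Module.finrank K ↥V ≤ Module.finrank K (H ⧸ JV) :=
    finrank_le_of_tensor_surjective K L _ hJVsur
  -- J1 ⊓ J2 = JV
  have hinter : J1 ⊓ J2 = JV := by
    ext h
    simp only [Submodule.mem_inf, hJVdef, LinearMap.mem_ker]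
    constructor
    · rintro ⟨ha, hb⟩
      have hker : V ≤ LinearMap.ker (α h : L →ₗ[K] L) := by
        rw [hVdef]
        apply sup_le
        · intro x hx
          exact LinearMap.mem_ker.mpr (ha x hx)
        · intro x hx
          exact LinearMap.mem_ker.mpr (hb x hx)
      ext x
      have hx0 := hker x.2
      simpa [resSub] using hx0
    · intro hz
      constructor
      · intro x hx
        have hxV : x ∈ V := SetLike.le_def.mp le_sup_left (show x ∈ V1 from hx)
        simpa [resSub] using LinearMap.congr_fun hz ⟨x, hxV⟩
      · intro x hx
        have hxV : x ∈ V := SetLike.le_def.mp le_sup_right (show x ∈ V2 from hx)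
        simpa [resSub] using LinearMap.congr_fun hz ⟨x, hxV⟩
  -- J1 ⊔ J2 ≤ J12
  have hle12 : J1 ⊔ J2 ≤ J12 := by
    apply sup_le
    · intro h hh x hx
      exact hh x (IntermediateField.mem_inf.mp hx).1
    · intro h hh x hx
      exact hh x (IntermediateField.mem_inf.mp hx).2
  have hmono : Module.finrank K ↥(J1 ⊔ J2) ≤ Module.finrank K ↥J12 :=
    Submodule.finrank_mono hle12
  have hsupinfJ := Submodule.finrank_sup_add_finrank_inf_eq J1 J2
  have hsupinfV := Submodule.finrank_sup_add_finrank_inf_eq V1 V2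
  rw [← hVdef] at hsupinfV
  -- identification of ranks of V1, V2, V1 ⊓ V2
  have hV1r : Module.finrank K ↥V1 = Module.finrank K ↥L1 := by
    rw [hV1def, Subalgebra.finrank_toSubmodule, IntermediateField.finrank_eq_finrank_subalgebra]
  have hV2r : Module.finrank K ↥V2 = Module.finrank K ↥L2 := by
    rw [hV2def, Subalgebra.finrank_toSubmodule, IntermediateField.finrank_eq_finrank_subalgebra]
  have hVinfr : Module.finrank K ↥(V1 ⊓ V2) = Module.finrank K ↥(L1 ⊓ L2) := by
    rw [hV1def, hV2def, ← Algebra.inf_toSubmodule, ← IntermediateField.inf_toSubalgebra,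
      Subalgebra.finrank_toSubmodule, IntermediateField.finrank_eq_finrank_subalgebra]
  have hA1 := hA L1
  have hA2 := hA L2
  have hA12 := hA (L1 ⊓ L2)
  rw [← hJ1def] at hA1
  rw [← hJ2def] at hA2
  rw [← hJ12def] at hA12
  have hinterr : Module.finrank K ↥(J1 ⊓ J2) = Module.finrank K ↥JV := by rw [hinter]
  -- numeric conclusion
  have hfinal : Module.finrank K ↥(J1 ⊔ J2) = Module.finrank K ↥J12 ∧
      Module.finrank K (H ⧸ J12) = Module.finrank K ↥(L1 ⊓ L2) := by
    constructor <;> omega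
  refine ⟨?_, (Submodule.eq_of_le_of_finrank_eq hle12 hfinal.1).symm⟩
  have hfr : Module.finrank K (L ⊗[K] (H ⧸ J12)) =
      Module.finrank K (↥(L1 ⊓ L2) →ₗ[K] L) := by
    rw [Module.finrank_tensorProduct, Module.finrank_linearMap, hfinal.2, mul_comm]
  exact (LinearMap.injective_iff_surjective_of_finrank_eq_finrank hfr).mpr
    (can0_surjective K L H α hsur (L1 ⊓ L2))

end Statement
end

section
/- Let L/K be a finite field extension and L1, L2 intermediate fields. For an intermediate field L' of L/K, set End_{L'}(L) := {f ∈ End_K(L) | f(c·x) = c·f(x) for all c ∈ L', x ∈ L}. If End_{L1}(L) = End_{L2}(L), then L1 = L2. -/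
/-- The set `End_{L'}(L)` of `K`-linear endomorphisms of `L` that are `L'`-linear. -/
def EndOver (K L : Type) [Field K] [Field L] [Algebra K L]
    (L' : IntermediateField K L) : Set (L →ₗ[K] L) :=
  {f : L →ₗ[K] L | ∀ c ∈ L', ∀ x : L, f (c * x) = c * f x}

lemma mem_of_forall_endOver (K L : Type) [Field K] [Field L] [Algebra K L]
    (F : IntermediateField K L) (c : L)
    (hc : ∀ f ∈ EndOver K L F, ∀ x : L, f (c * x) = c * f x) : c ∈ F := by
  classical
  by_contra hcF
  -- {c, 1} is linearly independent over F
  have h1 : LinearIndepOn F id ({c, 1} : Set L) := by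
    rw [show ({c, 1} : Set L) = insert c {1} from rfl,
      linearIndepOn_id_insert (by
        intro hm
        rw [Set.mem_singleton_iff] at hm
        exact hcF (hm ▸ F.one_mem))]
    refine ⟨LinearIndepOn.singleton one_ne_zero, fun hmem => hcF ?_⟩
    rw [Submodule.mem_span_singleton] at hmem
    obtain ⟨a, ha⟩ := hmem
    have : (a : L) = c := by simpa [IntermediateField.smul_def] using ha
    exact this ▸ a.2
  set B := Module.Basis.extend h1 with hB
  set f0 : L →ₗ[F] L := B.constr F (fun i => if (i : L) = 1 then (1 : L) else 0) with hf0
  have hsub : ({c, 1} : Set L) ⊆ h1.extend (Set.subset_univ _) := h1.subset_extend _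
  have hcmem : c ∈ h1.extend (Set.subset_univ _) := hsub (by simp)
  have h1mem : (1 : L) ∈ h1.extend (Set.subset_univ _) := hsub (by simp)
  have hf01 : f0 1 = 1 := by
    have := B.constr_basis F (fun i => if (i : L) = 1 then (1 : L) else 0) ⟨1, h1mem⟩
    rwa [Module.Basis.extend_apply_self, if_pos rfl] at this
  have hf0c : f0 c = 0 := by
    have := B.constr_basis F (fun i => if (i : L) = 1 then (1 : L) else 0) ⟨c, hcmem⟩
    rwa [Module.Basis.extend_apply_self, if_neg (fun hc1 : c = 1 => hcF (hc1 ▸ F.one_mem))] at this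
  set f : L →ₗ[K] L := f0.restrictScalars K with hf
  have hfmem : f ∈ EndOver K L F := by
    intro a ha x
    have : (⟨a, ha⟩ : F) • x = a * x := rfl
    calc f (a * x) = f0 ((⟨a, ha⟩ : F) • x) := by rw [this]; rfl
      _ = (⟨a, ha⟩ : F) • f0 x := map_smul f0 _ _
      _ = a * f x := rfl
  have := hc f hfmem 1
  rw [mul_one] at this
  have : (0 : L) = c := by
    simpa [hf, hf0c, hf01] using this
  exact hcF (this ▸ F.zero_mem)

/-- For a finite field extension `L/K` and intermediate fields `L1`, `L2`, if
`End_{L1}(L) = End_{L2}(L)`, then `L1 = L2`. -/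
theorem IntermediateField.eq_of_endOver_eq (K L : Type) [Field K] [Field L] [Algebra K L]
    [FiniteDimensional K L] (L1 L2 : IntermediateField K L)
    (h : EndOver K L L1 = EndOver K L L2) : L1 = L2 := by
  apply le_antisymm
  · intro c hc
    exact mem_of_forall_endOver K L L2 c (fun f hf x => (h ▸ hf : f ∈ EndOver K L L1) c hc x)
  · intro c hc
    exact mem_of_forall_endOver K L L1 c (fun f hf x => (h ▸ hf : f ∈ EndOver K L L2) c hc x)
end

section
/- Let G be a group, G' ≤ G a subgroup, and N a group equipped with a left G-action by group automorphisms. Suppose N acts on the right on the left coset space G/G' (so (xG')·1 = xG' and ((xG')·n)·m = (xG')·(nm)) such that g·((hG')·n) = (ghG')·(g·n) for all g, h ∈ G and n ∈ N, where G acts on G/G' by left translation, and suppose the orbit map β : N → G/G', n ↦ (1G')·n, is bijective. Let V ≤ N be a G-stable subgroup (g·V = V for all g ∈ G) and define U := {u ∈ G | uG' ∈ β(V)}. Then U is a subgroup of G containing G'. -/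
/-!
Translating by `u` and using the compatibility `g • (hG' · n) = (ghG') · (g • n)` gives
`(uG') · (u • n) = u • ((1G') · n)`. Hence if `uG' = (1G') · v` and `wG' = (1G') · v'`, then
`uwG' = (1G') · (v * u • v')`, and `u⁻¹G' = (1G') · (u⁻¹ • v)⁻¹`; both new labels lie in `V`
because `V` is a `G`-stable subgroup. Elements of `G'` are labelled by `1 ∈ V`.
-/

section CosetAction

variable {G : Type*} [Group G] {G' : Subgroup G} {N : Type*} [Group N] [MulDistribMulAction G N]
  {act : G ⧸ G' → N → G ⧸ G'}

theorem act_mk_smul (h_compat : ∀ (g h : G) (n : N), g • act (↑h) n = act (↑(g * h)) (g • n))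
    (g : G) (n : N) : act (g : G ⧸ G') (g • n) = g • act ((1 : G) : G ⧸ G') n := by
  rw [h_compat, mul_one]

theorem act_mk_one_eq_mk_mul (h_mul : ∀ (x : G ⧸ G') (n m : N), act (act x n) m = act x (n * m))
    (h_compat : ∀ (g h : G) (n : N), g • act (↑h) n = act (↑(g * h)) (g • n))
    {u w : G} {v v' : N} (hu : act ((1 : G) : G ⧸ G') v = u)
    (hw : act ((1 : G) : G ⧸ G') v' = w) :
    act ((1 : G) : G ⧸ G') (v * u • v') = ((u * w : G) : G ⧸ G') := by
  rw [← h_mul, hu, act_mk_smul h_compat, hw]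
  rfl

theorem act_mk_one_eq_mk_inv (h_one : ∀ x : G ⧸ G', act x 1 = x)
    (h_mul : ∀ (x : G ⧸ G') (n m : N), act (act x n) m = act x (n * m))
    (h_compat : ∀ (g h : G) (n : N), g • act (↑h) n = act (↑(g * h)) (g • n))
    {u : G} {v : N} (hu : act ((1 : G) : G ⧸ G') v = u) :
    act ((1 : G) : G ⧸ G') (u⁻¹ • v)⁻¹ = ((u⁻¹ : G) : G ⧸ G') := by
  have h_back : act ((u⁻¹ : G) : G ⧸ G') (u⁻¹ • v) = ((1 : G) : G ⧸ G') := by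
    rw [act_mk_smul h_compat, hu]
    exact congrArg _ (inv_mul_cancel u)
  rw [← h_back, h_mul, mul_inv_cancel, h_one]

end CosetAction

theorem exists_subgroup_of_stable_general (G : Type) [Group G] (G' : Subgroup G)
    (N : Type) [Group N] [MulDistribMulAction G N]
    (act : G ⧸ G' → N → G ⧸ G')
    (h_one : ∀ x : G ⧸ G', act x 1 = x)
    (h_mul : ∀ (x : G ⧸ G') (n m : N), act (act x n) m = act x (n * m))
    (h_compat : ∀ (g h : G) (n : N), g • act (↑h) n = act (↑(g * h)) (g • n))
    (V : Subgroup N) (hV : ∀ g : G, ∀ v ∈ V, g • v ∈ V) :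
    ∃ U : Subgroup G,
      (U : Set G) =
        {u : G | (↑u : G ⧸ G') ∈ (fun n : N => act ((1 : G) : G ⧸ G') n) '' (V : Set N)} ∧
      G' ≤ U := by
  refine ⟨{
    carrier := {u : G | (↑u : G ⧸ G') ∈ (fun n : N => act ((1 : G) : G ⧸ G') n) '' (V : Set N)}
    one_mem' := ⟨1, V.one_mem, h_one _⟩
    mul_mem' := fun {u _} ⟨v, hv, hu⟩ ⟨v', hv', hw⟩ =>
      ⟨v * u • v', V.mul_mem hv (hV u v' hv'), act_mk_one_eq_mk_mul h_mul h_compat hu hw⟩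
    inv_mem' := fun {u} ⟨v, hv, hu⟩ =>
      ⟨(u⁻¹ • v)⁻¹, V.inv_mem (hV u⁻¹ v hv), act_mk_one_eq_mk_inv h_one h_mul h_compat hu⟩ },
    rfl, fun g hg => ⟨1, V.one_mem, (h_one _).trans (QuotientGroup.eq.mpr (by simpa using hg))⟩⟩

/-- Let `G'` be a subgroup of `G` and let `N` be a group with a left `G`-action by group
automorphisms acting on the right on `G ⧸ G'` compatibly with left translation, with
bijective orbit map `β : n ↦ (1G')·n`. If `V ≤ N` is `G`-stable, then
`U = {u | uG' ∈ β(V)}` is a subgroup of `G` containing `G'`. -/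
theorem exists_subgroup_of_stable (G : Type) [Group G] (G' : Subgroup G)
    (N : Type) [Group N] [MulDistribMulAction G N]
    (act : G ⧸ G' → N → G ⧸ G')
    (h_one : ∀ x : G ⧸ G', act x 1 = x)
    (h_mul : ∀ (x : G ⧸ G') (n m : N), act (act x n) m = act x (n * m))
    (h_compat : ∀ (g h : G) (n : N), g • act (↑h) n = act (↑(g * h)) (g • n))
    (hβ : Function.Bijective fun n : N => act ((1 : G) : G ⧸ G') n)
    (V : Subgroup N) (hV : ∀ g : G, ∀ v ∈ V, g • v ∈ V) :
    ∃ U : Subgroup G,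
      (U : Set G) =
        {u : G | (↑u : G ⧸ G') ∈ (fun n : N => act ((1 : G) : G ⧸ G') n) '' (V : Set N)} ∧
      G' ≤ U :=
  exists_subgroup_of_stable_general G G' N act h_one h_mul h_compat V hV
end

section
/- Let G be a group, G' ≤ G a subgroup, and N a group with a left G-action by group automorphisms, acting on the right on G/G' with g·((hG')·n) = (ghG')·(g·n) for all g, h ∈ G, n ∈ N, such that the orbit map β : N → G/G', n ↦ (1G')·n, is bijective. Let V ≤ N be a G-stable subgroup and U := {u ∈ G | uG' ∈ β(V)} (a subgroup of G containing G'). Then the composition of β with the natural projection pr_U : G/G' → G/U is constant on each left coset nV of V in N, and the induced map on the left coset space N/V → G/U is a bijection. -/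
/-! Write `β n = act (1G') n`. If `β n = gG'`, compatibility gives `β (n * g • v) = g • β v`, so
every `m` is `n * g • v` for a unique `v`, and `pr_U (β m) = pr_U (β n)` iff `pr_U (β v) = 1U`,
i.e. (by injectivity of `β` and the definition of `U`) iff `v ∈ V`, i.e. (by `G`-stability) iff
`n⁻¹ * m ∈ V`. Thus the fibres of `pr_U ∘ β` are exactly the left cosets of `V`, and `pr_U ∘ β` is
onto because `β` is. -/

open Function

namespace Subgroup

theorem quotientMapOfLE_smul {G : Type*} [Group G] {H U : Subgroup G} (hHU : H ≤ U) (g : G)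
    (x : G ⧸ H) : quotientMapOfLE hHU (g • x) = g • quotientMapOfLE hHU x := by
  induction x using QuotientGroup.induction_on
  rfl

end Subgroup

section OrbitMap

open Subgroup

variable {G N : Type*} [Group G] [Group N] {H : Subgroup G} {act : G ⧸ H → N → G ⧸ H}
  {V : Subgroup N} {U : Subgroup G}

theorem mem_iff_quotientMapOfLE_act_one_eq_one
    (hβ : Injective fun n : N => act ((1 : G) : G ⧸ H) n)
    (hU : ∀ u : G, u ∈ U ↔
      (↑u : G ⧸ H) ∈ (fun n : N => act ((1 : G) : G ⧸ H) n) '' (V : Set N))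
    (hHU : H ≤ U) (v : N) :
    v ∈ V ↔ quotientMapOfLE hHU (act ((1 : G) : G ⧸ H) v) = ((1 : G) : G ⧸ U) := by
  obtain ⟨u, hu⟩ := QuotientGroup.mk_surjective (act ((1 : G) : G ⧸ H) v)
  rw [← hu, quotientMapOfLE_apply_mk, QuotientGroup.eq, mul_one, inv_mem_iff, hU, hu,
    hβ.mem_set_image, SetLike.mem_coe]

variable [MulAction G N]

theorem act_one_mul_smul (h_mul : ∀ (x : G ⧸ H) (n m : N), act (act x n) m = act x (n * m))
    (h_compat : ∀ (g h : G) (n : N), g • act (↑h) n = act (↑(g * h)) (g • n))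
    {n : N} {g : G} (hn : act ((1 : G) : G ⧸ H) n = g) (v : N) :
    act ((1 : G) : G ⧸ H) (n * g • v) = g • act ((1 : G) : G ⧸ H) v := by
  rw [← h_mul, hn, h_compat, mul_one]

theorem quotientMapOfLE_act_one_eq_iff
    (h_mul : ∀ (x : G ⧸ H) (n m : N), act (act x n) m = act x (n * m))
    (h_compat : ∀ (g h : G) (n : N), g • act (↑h) n = act (↑(g * h)) (g • n))
    (hβ : Injective fun n : N => act ((1 : G) : G ⧸ H) n)
    (hV : ∀ g : G, ∀ v ∈ V, g • v ∈ V)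
    (hU : ∀ u : G, u ∈ U ↔
      (↑u : G ⧸ H) ∈ (fun n : N => act ((1 : G) : G ⧸ H) n) '' (V : Set N))
    (hHU : H ≤ U) (n m : N) :
    quotientMapOfLE hHU (act ((1 : G) : G ⧸ H) n) =
        quotientMapOfLE hHU (act ((1 : G) : G ⧸ H) m) ↔ n⁻¹ * m ∈ V := by
  obtain ⟨g, hg⟩ := QuotientGroup.mk_surjective (act ((1 : G) : G ⧸ H) n)
  obtain ⟨v, rfl⟩ : ∃ v, m = n * g • v := ⟨g⁻¹ • (n⁻¹ * m), by simp⟩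
  have hV_iff : g • v ∈ V ↔ v ∈ V := ⟨fun h ↦ inv_smul_smul g v ▸ hV g⁻¹ _ h, hV g v⟩
  have hg_one : (g : G ⧸ U) = g • ((1 : G) : G ⧸ U) := by
    rw [MulAction.Quotient.smul_mk, smul_eq_mul, mul_one]
  rw [act_one_mul_smul h_mul h_compat hg.symm, inv_mul_cancel_left, hV_iff, ← hg,
    mem_iff_quotientMapOfLE_act_one_eq_one hβ hU hHU, quotientMapOfLE_smul,
    quotientMapOfLE_apply_mk, hg_one, smul_left_cancel_iff, eq_comm]

end OrbitMap

theorem quotient_bijection_of_stable_general (G : Type) [Group G] (G' : Subgroup G)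
    (N : Type) [Group N] [MulDistribMulAction G N]
    (act : G ⧸ G' → N → G ⧸ G')
    (h_mul : ∀ (x : G ⧸ G') (n m : N), act (act x n) m = act x (n * m))
    (h_compat : ∀ (g h : G) (n : N), g • act (↑h) n = act (↑(g * h)) (g • n))
    (hβ : Function.Bijective fun n : N => act ((1 : G) : G ⧸ G') n)
    (V : Subgroup N) (hV : ∀ g : G, ∀ v ∈ V, g • v ∈ V)
    (U : Subgroup G)
    (hU : ∀ u : G, u ∈ U ↔
      (↑u : G ⧸ G') ∈ (fun n : N => act ((1 : G) : G ⧸ G') n) '' (V : Set N))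
    (hG'U : G' ≤ U) :
    (∀ n : N, ∀ v ∈ V,
        Subgroup.quotientMapOfLE hG'U
            (act ((1 : G) : G ⧸ G') (n * v)) =
          Subgroup.quotientMapOfLE hG'U
            (act ((1 : G) : G ⧸ G') n)) ∧
      ∃ f : N ⧸ V → G ⧸ U,
        (∀ n : N,
          f ↑n =
            Subgroup.quotientMapOfLE hG'U
              (act ((1 : G) : G ⧸ G') n)) ∧
        Function.Bijective f := by
  have fiber := quotientMapOfLE_act_one_eq_iff h_mul h_compat hβ.injective hV hU hG'U
  refine ⟨fun n v hv ↦ ((fiber n (n * v)).2 (by rwa [inv_mul_cancel_left])).symm, ?_⟩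
  refine ⟨Quotient.lift _ fun a b hab ↦ (fiber a b).2 (QuotientGroup.leftRel_apply.1 hab),
    fun n ↦ rfl, ?_, ?_⟩
  · rintro ⟨n⟩ ⟨m⟩ h
    exact QuotientGroup.eq.2 ((fiber n m).1 h)
  · rintro ⟨g⟩
    obtain ⟨n, hn⟩ := hβ.surjective g
    exact ⟨n, congrArg (Subgroup.quotientMapOfLE hG'U) hn⟩

/-- With `G'`, `N`, the compatible right action of `N` on `G ⧸ G'` with bijective orbit map
`β`, a `G`-stable subgroup `V ≤ N` and `U = {u | uG' ∈ β(V)}` (a subgroup containing `G'`),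
the composite `pr_U ∘ β : N → G ⧸ U` is constant on left cosets of `V` and induces a
bijection `N ⧸ V ≃ G ⧸ U`. -/
theorem quotient_bijection_of_stable (G : Type) [Group G] (G' : Subgroup G)
    (N : Type) [Group N] [MulDistribMulAction G N]
    (act : G ⧸ G' → N → G ⧸ G')
    (h_one : ∀ x : G ⧸ G', act x 1 = x)
    (h_mul : ∀ (x : G ⧸ G') (n m : N), act (act x n) m = act x (n * m))
    (h_compat : ∀ (g h : G) (n : N), g • act (↑h) n = act (↑(g * h)) (g • n))
    (hβ : Function.Bijective fun n : N => act ((1 : G) : G ⧸ G') n)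
    (V : Subgroup N) (hV : ∀ g : G, ∀ v ∈ V, g • v ∈ V)
    (U : Subgroup G)
    (hU : ∀ u : G, u ∈ U ↔
      (↑u : G ⧸ G') ∈ (fun n : N => act ((1 : G) : G ⧸ G') n) '' (V : Set N))
    (hG'U : G' ≤ U) :
    (∀ n : N, ∀ v ∈ V,
        Subgroup.quotientMapOfLE hG'U
            (act ((1 : G) : G ⧸ G') (n * v)) =
          Subgroup.quotientMapOfLE hG'U
            (act ((1 : G) : G ⧸ G') n)) ∧
      ∃ f : N ⧸ V → G ⧸ U,
        (∀ n : N,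
          f ↑n =
            Subgroup.quotientMapOfLE hG'U
              (act ((1 : G) : G ⧸ G') n)) ∧
        Function.Bijective f :=
  quotient_bijection_of_stable_general G G' N act h_mul h_compat hβ V hV U hU hG'U
end

section
/- Let K be a field, C and D coalgebras over K, and f : C → D a surjective coalgebra morphism (a K-linear map with Δ_D ∘ f = (f ⊗ f) ∘ Δ_C and ε_D ∘ f = ε_C). If C has a K-basis B consisting of grouplike elements, then the set f(B) is a K-basis of D consisting of grouplike elements; in particular D has a basis of grouplike elements. -/
/-- An element of a coalgebra is grouplike if `Δ x = x ⊗ x` and `ε x = 1`. -/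
def IsGrouplike (K C : Type) [Field K] [AddCommGroup C] [Module K C] [Coalgebra K C]
    (x : C) : Prop :=
  Coalgebra.comul (R := K) x = x ⊗ₜ[K] x ∧ Coalgebra.counit (R := K) x = 1

open TensorProduct

open Classical in
lemma exists_dual_functional (K D : Type) [Field K] [AddCommGroup D] [Module K D]
    {s : Set D} (hli : LinearIndependent K ((↑) : s → D)) {x : D} (hx : x ∈ s) :
    ∃ φ : D →ₗ[K] K, ∀ y ∈ s, φ y = if y = x then 1 else 0 := by
  classical
  let b := Module.Basis.extend hli
  refine ⟨b.coord ⟨x, (show LinearIndepOn K id s from hli).subset_extend _ hx⟩, fun y hy => ?_⟩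
  have hyb : y ∈ (show LinearIndepOn K id s from hli).extend (Set.subset_univ s) :=
    (show LinearIndepOn K id s from hli).subset_extend _ hy
  have h2 : b ⟨y, hyb⟩ = y := Module.Basis.extend_apply_self hli ⟨y, hyb⟩
  rw [← h2, Module.Basis.coord_apply, Module.Basis.repr_self, Finsupp.single_apply, h2]
  simp [Subtype.ext_iff]

lemma grouplike_not_mem_span (K D : Type) [Field K] [AddCommGroup D] [Module K D]
    [Coalgebra K D] {s : Set D} (hsf : s.Finite)
    (hgl : ∀ x ∈ s, IsGrouplike K D x) (hli : LinearIndependent K ((↑) : s → D))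
    {a : D} (ha : IsGrouplike K D a) (has : a ∉ s) : a ∉ Submodule.span K s := by
  classical
  intro hmem
  set T := hsf.toFinset with hT
  rw [← hsf.coe_toFinset] at hmem
  obtain ⟨c, -, hc⟩ := Submodule.mem_span_finset.mp hmem
  have hmemT : ∀ x ∈ T, x ∈ s := fun x hx => hsf.mem_toFinset.mp hx
  -- counit gives sum of coefficients = 1
  have hsum1 : ∑ x ∈ T, c x = 1 := by
    have h := ha.2
    rw [← hc, map_sum] at h
    rw [← h]
    exact Finset.sum_congr rfl fun x hx => by
      rw [map_smul, (hgl x (hmemT x hx)).2, smul_eq_mul, mul_one]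
  obtain ⟨x0, hx0T, hx0⟩ := Finset.exists_ne_zero_of_sum_ne_zero
    (hsum1 ▸ (one_ne_zero : (1:K) ≠ 0))
  have hx0s : x0 ∈ s := hmemT x0 hx0T
  -- pairing
  let F : (D →ₗ[K] K) → (D →ₗ[K] K) → (D ⊗[K] D →ₗ[K] K) := fun u v =>
    (LinearMap.mul' K K) ∘ₗ TensorProduct.map u v
  have key : ∀ y ∈ s, ∀ z ∈ s, c y * c z = if y = z then c y else 0 := by
    intro y hy z hz
    obtain ⟨φ, hφ⟩ := exists_dual_functional K D hli hy
    obtain ⟨ψ, hψ⟩ := exists_dual_functional K D hli hz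
    have happ : ∀ (u : D →ₗ[K] K), (∀ x ∈ s, u x = if x = y then 1 else 0) → u a = c y := by
      intro u hu
      rw [← hc, map_sum]
      have : ∀ x ∈ T, u (c x • x) = if x = y then c x else 0 := by
        intro x hx
        rw [map_smul, hu x (hmemT x hx), smul_eq_mul]
        split <;> simp
      rw [Finset.sum_congr rfl this, Finset.sum_ite_eq' T y c,
        if_pos (hsf.mem_toFinset.mpr hy)]
    have hφa : φ a = c y := happ φ hφ
    have hψa : ψ a = c z := by
      rw [← hc, map_sum]
      have : ∀ x ∈ T, ψ (c x • x) = if x = z then c x else 0 := by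
        intro x hx
        rw [map_smul, hψ x (hmemT x hx), smul_eq_mul]
        split <;> simp
      rw [Finset.sum_congr rfl this, Finset.sum_ite_eq' T z c,
        if_pos (hsf.mem_toFinset.mpr hz)]
    have h1 : F φ ψ (Coalgebra.comul (R := K) a) = c y * c z := by
      rw [ha.1]
      simp [F, hφa, hψa]
    have h2 : F φ ψ (Coalgebra.comul (R := K) a)
        = ∑ x ∈ T, c x * ((if x = y then 1 else 0) * (if x = z then 1 else 0)) := by
      rw [← hc, map_sum, map_sum]
      refine Finset.sum_congr rfl fun x hx => ?_
      have hxs := hmemT x hx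
      rw [map_smul, (hgl x hxs).1, map_smul]
      simp [F, hφ x hxs, hψ x hxs, smul_eq_mul, mul_assoc]
    rw [h2] at h1
    rw [← h1]
    by_cases hyz : y = z
    · subst hyz
      rw [if_pos rfl]
      refine (Finset.sum_congr rfl fun x hx => ?_).trans
        ((Finset.sum_ite_eq' T y c).trans (if_pos (hsf.mem_toFinset.mpr hy)))
      split <;> simp
    · rw [if_neg hyz]
      refine Finset.sum_eq_zero fun x hx => ?_
      by_cases h : x = y
      · subst h; rw [if_neg hyz, mul_zero, mul_zero]
      · rw [if_neg h, zero_mul, mul_zero]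
  have hc0 : c x0 = 1 := by
    have h := key x0 hx0s x0 hx0s
    rw [if_pos rfl] at h
    exact mul_right_cancel₀ hx0 (h.trans (one_mul (c x0)).symm)
  have hrest : ∀ z ∈ T, z ≠ x0 → c z = 0 := by
    intro z hz hne
    have h := key x0 hx0s z (hmemT z hz)
    rw [if_neg (fun h' => hne h'.symm), hc0, one_mul] at h
    exact h
  have : a = x0 := by
    rw [← hc, Finset.sum_eq_single x0 (fun z hz hne => by rw [hrest z hz hne, zero_smul])
      (fun h => absurd hx0T h), hc0, one_smul]
  exact has (this ▸ hx0s)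

lemma grouplike_linearIndependent (K D : Type) [Field K] [AddCommGroup D] [Module K D]
    [Coalgebra K D] (s : Set D) (hgl : ∀ x ∈ s, IsGrouplike K D x) :
    LinearIndependent K ((↑) : s → D) := by
  apply linearIndepOn_of_finite (v := id)
  intro t hts htf
  have : ∀ u : Set D, u.Finite → u ⊆ s → LinearIndependent K ((↑) : u → D) := by
    intro u huf
    refine Set.Finite.induction_on
      (motive := fun u _ => u ⊆ s → LinearIndependent K ((↑) : u → D)) u huf
      (fun _ => linearIndependent_empty K D) ?_
    intro a u' hau hu'f ih hsub
    have hu's : u' ⊆ s := (Set.subset_insert a u').trans hsub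
    have hli := ih hu's
    exact LinearIndepOn.id_insert hli (grouplike_not_mem_span K D hu'f (fun x hx => hgl x (hu's hx)) hli
      (hgl a (hsub (Set.mem_insert a u'))) hau)
  exact this t htf hts

/-- If `f : C → D` is a surjective coalgebra morphism and `C` has a basis `B` of grouplike
elements, then `f '' B` is a basis of `D` consisting of grouplike elements. -/
theorem image_basis_grouplike (K C D : Type) [Field K]
    [AddCommGroup C] [Module K C] [Coalgebra K C]
    [AddCommGroup D] [Module K D] [Coalgebra K D]
    (f : C →ₗc[K] D) (hf : Function.Surjective f)
    (B : Set C) (hBgl : ∀ x ∈ B, IsGrouplike K C x)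
    (hBli : LinearIndependent K ((↑) : B → C))
    (hBspan : Submodule.span K B = ⊤) :
    (∀ y ∈ f '' B, IsGrouplike K D y) ∧
      LinearIndependent K ((↑) : (f '' B) → D) ∧
      Submodule.span K (f '' B) = ⊤ := by
  have hgl : ∀ y ∈ f '' B, IsGrouplike K D y := by
    rintro y ⟨x, hx, rfl⟩
    constructor
    · have := CoalgHomClass.map_comp_comul_apply f x
      rw [(hBgl x hx).1] at this
      simpa using this.symm
    · rw [CoalgHomClass.counit_comp_apply f x]
      exact (hBgl x hx).2
  refine ⟨hgl, grouplike_linearIndependent K D _ hgl, ?_⟩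
  have himg : ⇑f '' B = ⇑f.toLinearMap '' B := rfl
  rw [himg, Submodule.span_image, hBspan, Submodule.map_top, LinearMap.range_eq_top]
  exact hf
end

section
/- Let K be a field and V a K-vector space that is a topological additive group admitting a neighbourhood basis of 0 consisting of open K-submodules, each of finite codimension in V (i.e. each with finite-dimensional quotient). Let W ⊆ V be a closed K-submodule. Then W is open in V if and only if the quotient V/W is finite-dimensional over K. -/
/-- Let `V` be a topological `K`-vector space admitting a neighbourhood basis of `0`
consisting of open submodules of finite codimension. A closed submodule `W ⊆ V` is open
iff the quotient `V ⧸ W` is finite-dimensional. -/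
theorem closed_submodule_open_iff_finite_codim (K V : Type) [Field K]
    [AddCommGroup V] [Module K V] [TopologicalSpace V] [IsTopologicalAddGroup V]
    (Λ : Set (Submodule K V))
    (hΛopen : ∀ U ∈ Λ, IsOpen (U : Set V))
    (hΛfin : ∀ U ∈ Λ, FiniteDimensional K (V ⧸ U))
    (hΛbasis : (nhds (0 : V)).HasBasis (fun U : Submodule K V => U ∈ Λ)
      (fun U : Submodule K V => (U : Set V)))
    (W : Submodule K V) (hW : IsClosed (W : Set V)) :
    IsOpen (W : Set V) ↔ FiniteDimensional K (V ⧸ W) := by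
  constructor
  · intro hOpen
    obtain ⟨U, hUΛ, hUW⟩ := hΛbasis.mem_iff.mp (hOpen.mem_nhds W.zero_mem)
    haveI := hΛfin U hUΛ
    have hle : U ≤ Submodule.comap LinearMap.id W := fun x hx => hUW hx
    exact Module.Finite.of_surjective (Submodule.mapQ U W LinearMap.id hle)
      (fun y => Quotient.inductionOn' y fun v => ⟨Submodule.Quotient.mk v, rfl⟩)
  · intro hfin
    -- Since W is closed, any x lying in W ⊔ U for all U ∈ Λ is in W.
    have hker : ∀ x : V, (∀ U ∈ Λ, x ∈ W ⊔ U) → x ∈ W := by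
      intro x hx
      have hcl : x ∈ closure (W : Set V) := by
        have hb : (nhds x).HasBasis (fun U : Submodule K V => U ∈ Λ)
            (fun U : Submodule K V => (x + ·) '' (U : Set V)) := by
          rw [← map_add_left_nhds_zero x]
          exact hΛbasis.map _
        rw [mem_closure_iff_nhds_basis hb]
        intro U hU
        obtain ⟨w, hw, u, hu, hwu⟩ := Submodule.mem_sup.mp (hx U hU)
        exact ⟨w, hw, -u, U.neg_mem hu, by simp [← hwu]⟩
      rwa [hW.closure_eq] at hcl
    obtain ⟨U₁, hU₁, -⟩ := hΛbasis.mem_iff.mp (Filter.univ_mem)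
    -- minimal element of the images of W ⊔ U in V ⧸ W
    haveI : IsArtinian K (V ⧸ W) := inferInstance
    set S : Set (Submodule K (V ⧸ W)) :=
      (fun U : Submodule K V => (W ⊔ U).map W.mkQ) '' Λ with hS
    have hSne : S.Nonempty := ⟨_, ⟨U₁, hU₁, rfl⟩⟩
    obtain ⟨M, hMS, hMmin⟩ :=
      (IsWellFounded.wf (r := ((· < ·) : Submodule K (V ⧸ W) → Submodule K (V ⧸ W) → Prop))).has_min
        S hSne
    obtain ⟨U₀, hU₀, hMeq⟩ := hMS
    -- M is below every member of S
    have hMle : ∀ U ∈ Λ, M ≤ (W ⊔ U).map W.mkQ := by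
      intro U hU
      have hmem : (U : Set V) ∩ (U₀ : Set V) ∈ nhds (0 : V) :=
        Filter.inter_mem (hΛbasis.mem_of_mem hU) (hΛbasis.mem_of_mem hU₀)
      obtain ⟨U', hU', hU'sub⟩ := hΛbasis.mem_iff.mp hmem
      have hU'U : U' ≤ U := fun x hx => (hU'sub hx).1
      have hU'U₀ : U' ≤ U₀ := fun x hx => (hU'sub hx).2
      have h1 : (W ⊔ U').map W.mkQ ≤ M := by
        rw [← hMeq]
        exact Submodule.map_mono (sup_le_sup_left hU'U₀ W)
      have h2 : ¬ (W ⊔ U').map W.mkQ < M := hMmin _ ⟨U', hU', rfl⟩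
      have heq : (W ⊔ U').map W.mkQ = M := eq_of_le_of_not_lt h1 h2
      calc M = (W ⊔ U').map W.mkQ := heq.symm
        _ ≤ (W ⊔ U).map W.mkQ := Submodule.map_mono (sup_le_sup_left hU'U W)
    -- hence U₀ ≤ W
    have hU₀W : U₀ ≤ W := by
      intro u hu
      apply hker
      intro U hU
      have h1 : W.mkQ u ∈ M := by
        rw [← hMeq]
        exact ⟨u, Submodule.mem_sup_right hu, rfl⟩
      obtain ⟨y, hy, hyu⟩ := hMle U hU h1
      have : y - u ∈ W := (Submodule.Quotient.eq W).mp hyu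
      have : u = y - (y - u) := by abel
      rw [this]
      exact Submodule.sub_mem _ hy (Submodule.mem_sup_left ‹y - u ∈ W›)
    -- W contains the open submodule U₀, hence is open
    have hWnhds : (W : Set V) ∈ nhds (0 : V) :=
      Filter.mem_of_superset ((hΛopen U₀ hU₀).mem_nhds U₀.zero_mem) hU₀W
    exact AddSubgroup.isOpen_of_mem_nhds W.toAddSubgroup hWnhds
end
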